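/- arXiv:2012.14101 — 7 statements merged into one kernel-verified Lean document; each statement's English description precedes it below -/
import Mathlib

section
/- Define H* = D − (i·γ)·T + α·(D∘D). Then H* is the formal adjoint of H with respect to the Fock inner product on polynomials, i.e. ⟨H(p), q⟩ = ⟨p, H*(q)⟩ for all polynomials p, q; moreover, if γ ≠ 0 then H* ≠ H, i.e. the Hamiltonian H is not formally self-adjoint. -/
open MvPolynomial

/-- D = ζ₁∂₁ − ζ₂∂₂ -/
noncomputable def Dop (p : MvPolynomial (Fin 2) ℂ) : MvPolynomial (Fin 2) ℂ :=
  X 0 * pderiv 0 p - X 1 * pderiv 1 p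

/-- T = ζ₁∂₂ + ζ₂∂₁ -/
noncomputable def Tmix (p : MvPolynomial (Fin 2) ℂ) : MvPolynomial (Fin 2) ℂ :=
  X 0 * pderiv 1 p + X 1 * pderiv 0 p

/-- H = D + iγT + αD² -/
noncomputable def Ham (γ α : ℝ) (p : MvPolynomial (Fin 2) ℂ) : MvPolynomial (Fin 2) ℂ :=
  Dop p + (Complex.I * (γ : ℂ)) • Tmix p + (α : ℂ) • Dop (Dop p)

/-- H* = D − iγT + αD² -/
noncomputable def HamStar (γ α : ℝ) (p : MvPolynomial (Fin 2) ℂ) : MvPolynomial (Fin 2) ℂ :=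
  Dop p - (Complex.I * (γ : ℂ)) • Tmix p + (α : ℂ) • Dop (Dop p)

/-- The Fock (Segal–Bargmann) inner product on polynomials in two variables. -/
noncomputable def fock (p q : MvPolynomial (Fin 2) ℂ) : ℂ :=
  ∑ d ∈ p.support ∪ q.support,
    ((d 0).factorial : ℂ) * ((d 1).factorial : ℂ) * coeff d p * (starRingEnd ℂ) (coeff d q)

open Finset
noncomputable def w (d : Fin 2 →₀ ℕ) : ℂ := ((d 0).factorial : ℂ) * ((d 1).factorial : ℂ)

lemma fock_eq_left (p q : MvPolynomial (Fin 2) ℂ) (S : Finset (Fin 2 →₀ ℕ))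
    (h : p.support ⊆ S) :
    fock p q = ∑ d ∈ S, w d * coeff d p * (starRingEnd ℂ) (coeff d q) := by
  unfold fock w
  have h1 : p.support ∪ q.support ⊆ (p.support ∪ q.support) ∪ S := subset_union_left
  have h2 : S ⊆ (p.support ∪ q.support) ∪ S := subset_union_right
  rw [Finset.sum_subset h1, Finset.sum_subset h2]
  · intro d _ hd
    have : coeff d p = 0 := by
      by_contra hc
      exact hd (h (mem_support_iff.2 hc))
    simp [this]
  · intro d _ hd
    have : coeff d p = 0 := by
      by_contra hc
      exact hd (Finset.mem_union_left _ (mem_support_iff.2 hc))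
    simp [this]

lemma fock_conj (p q : MvPolynomial (Fin 2) ℂ) :
    fock q p = (starRingEnd ℂ) (fock p q) := by
  unfold fock
  rw [Finset.union_comm, map_sum]
  refine Finset.sum_congr rfl fun d _ => ?_
  simp only [map_mul, Complex.conj_conj, map_natCast]
  ring

lemma coeff_pderiv (i : Fin 2) (d : Fin 2 →₀ ℕ) (p : MvPolynomial (Fin 2) ℂ) :
    coeff d (pderiv i p) = ((d i : ℂ) + 1) * coeff (d + Finsupp.single i 1) p := by
  induction p using MvPolynomial.induction_on' with
  | monomial s a =>
    rw [pderiv_monomial]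
    simp only [coeff_monomial]
    by_cases hs : Finsupp.single i 1 ≤ s
    · have heq : s - Finsupp.single i 1 = d ↔ s = d + Finsupp.single i 1 :=
        tsub_eq_iff_eq_add_of_le hs
      by_cases hd : s = d + Finsupp.single i 1
      · rw [if_pos (heq.2 hd), if_pos hd, hd]
        simp [Finsupp.add_apply, Finsupp.single_apply, mul_comm]
      · rw [if_neg (fun h => hd (heq.1 h)), if_neg hd, mul_zero]
    · have hsi : s i = 0 := by
        by_contra hc
        exact hs (Finsupp.single_le_iff.2 (Nat.one_le_iff_ne_zero.2 hc))
      have hd : s ≠ d + Finsupp.single i 1 := by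
        intro h
        apply hs
        rw [h]; exact le_add_self
      rw [if_neg hd, mul_zero, hsi]
      simp
  | add p q hp hq => simp [hp, hq]; ring

lemma w_add_single (i : Fin 2) (e : Fin 2 →₀ ℕ) :
    w (Finsupp.single i 1 + e) = ((e i : ℂ) + 1) * w e := by
  unfold w
  fin_cases i <;>
    simp [Finsupp.add_apply, Finsupp.single_apply, add_comm 1, Nat.factorial_succ] <;>
    push_cast <;> ring

lemma fock_X_mul (i : Fin 2) (r q : MvPolynomial (Fin 2) ℂ) :
    fock (X i * r) q = fock r (pderiv i q) := by
  rw [fock_eq_left (X i * r) q ((X i * r).support) subset_rfl,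
      fock_eq_left r (pderiv i q) r.support subset_rfl,
      support_X_mul, Finset.sum_map]
  refine Finset.sum_congr rfl fun e _ => ?_
  have h1 : (addLeftEmbedding (Finsupp.single i 1)) e = Finsupp.single i 1 + e := rfl
  rw [h1, coeff_X_mul, coeff_pderiv, w_add_single]
  simp only [map_mul, map_add, map_natCast, map_one]
  rw [add_comm e (Finsupp.single i 1)]
  ring

lemma fock_X_mul_right (i : Fin 2) (p s : MvPolynomial (Fin 2) ℂ) :
    fock p (X i * s) = fock (pderiv i p) s := by
  rw [fock_conj, fock_X_mul, ← fock_conj]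

lemma fock_add_left (p₁ p₂ q : MvPolynomial (Fin 2) ℂ) :
    fock (p₁ + p₂) q = fock p₁ q + fock p₂ q := by
  classical
  set S := p₁.support ∪ p₂.support with hS
  have h : (p₁ + p₂).support ⊆ S := support_add
  rw [fock_eq_left (p₁ + p₂) q S h, fock_eq_left p₁ q S subset_union_left,
      fock_eq_left p₂ q S subset_union_right, ← Finset.sum_add_distrib]
  exact Finset.sum_congr rfl fun d _ => by rw [coeff_add]; ring

lemma fock_smul_left (c : ℂ) (p q : MvPolynomial (Fin 2) ℂ) :
    fock (c • p) q = c * fock p q := by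
  rw [fock_eq_left (c • p) q p.support support_smul, fock_eq_left p q p.support subset_rfl,
      Finset.mul_sum]
  exact Finset.sum_congr rfl fun d _ => by rw [coeff_smul]; simp; ring

lemma fock_sub_left (p₁ p₂ q : MvPolynomial (Fin 2) ℂ) :
    fock (p₁ - p₂) q = fock p₁ q - fock p₂ q := by
  have : p₁ - p₂ = p₁ + (-1 : ℂ) • p₂ := by rw [neg_one_smul]; ring
  rw [this, fock_add_left, fock_smul_left]; ring

lemma fock_add_right (p q₁ q₂ : MvPolynomial (Fin 2) ℂ) :
    fock p (q₁ + q₂) = fock p q₁ + fock p q₂ := by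
  rw [fock_conj, fock_add_left, map_add, ← fock_conj, ← fock_conj]

lemma fock_smul_right (c : ℂ) (p q : MvPolynomial (Fin 2) ℂ) :
    fock p (c • q) = (starRingEnd ℂ) c * fock p q := by
  rw [fock_conj, fock_smul_left, map_mul, ← fock_conj]

lemma fock_sub_right (p q₁ q₂ : MvPolynomial (Fin 2) ℂ) :
    fock p (q₁ - q₂) = fock p q₁ - fock p q₂ := by
  rw [fock_conj, fock_sub_left, map_sub, ← fock_conj, ← fock_conj]

lemma fock_Dop (p q : MvPolynomial (Fin 2) ℂ) : fock (Dop p) q = fock p (Dop q) := by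
  unfold Dop
  rw [fock_sub_left, fock_sub_right, fock_X_mul, fock_X_mul,
      fock_X_mul_right, fock_X_mul_right]

lemma fock_Tmix (p q : MvPolynomial (Fin 2) ℂ) : fock (Tmix p) q = fock p (Tmix q) := by
  unfold Tmix
  rw [fock_add_left, fock_add_right, fock_X_mul, fock_X_mul,
      fock_X_mul_right, fock_X_mul_right, add_comm]


theorem hamStar_is_adjoint_and_ham_not_selfAdjoint (γ α : ℝ) :
    (∀ p q : MvPolynomial (Fin 2) ℂ, fock (Ham γ α p) q = fock p (HamStar γ α q)) ∧
    (γ ≠ 0 → HamStar γ α ≠ Ham γ α) := by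
  constructor
  · intro p q
    unfold Ham HamStar
    rw [fock_add_left, fock_add_left, fock_smul_left, fock_smul_left,
        fock_add_right, fock_sub_right, fock_smul_right, fock_smul_right,
        fock_Dop, fock_Tmix, fock_Dop, fock_Dop]
    simp only [map_mul, Complex.conj_I, Complex.conj_ofReal]
    ring
  · intro hγ h
    have h0 := congrFun h (X 0)
    have hne : (0 : Fin 2) ≠ 1 := by decide
    have hne' : (1 : Fin 2) ≠ 0 := by decide
    simp only [HamStar, Ham, Dop, Tmix, pderiv_X_self, pderiv_X_of_ne hne,
      pderiv_X_of_ne hne', mul_one, mul_zero, sub_zero, add_zero, zero_add] at h0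
    have h1 := congrArg (coeff (Finsupp.single 1 1)) h0
    simp [coeff_X', Complex.ext_iff, Finsupp.single_eq_single_iff] at h1
    exact hγ (by linarith)
end

section
/- The Hamiltonian H is C₂-self-adjoint: with H* = D − (i·γ)·T + α·(D∘D) the formal adjoint of H, one has C₂(H*(C₂(p))) = H(p) for every polynomial p in two complex variables. -/
open MvPolynomial

/-- Global PT conjugation: conjugate all coefficients, then ζ₁ ↦ −ζ₁, ζ₂ ↦ −ζ₂. -/
noncomputable def C2 (p : MvPolynomial (Fin 2) ℂ) : MvPolynomial (Fin 2) ℂ :=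
  aeval (fun j : Fin 2 => -(X j : MvPolynomial (Fin 2) ℂ)) (MvPolynomial.map (starRingEnd ℂ) p)

/-- First partial PT conjugation: conjugate all coefficients, then ζ₁ ↦ −ζ₁. -/
noncomputable def C21 (p : MvPolynomial (Fin 2) ℂ) : MvPolynomial (Fin 2) ℂ :=
  aeval (fun j : Fin 2 => if j = 0 then -(X j : MvPolynomial (Fin 2) ℂ) else X j)
    (MvPolynomial.map (starRingEnd ℂ) p)

/-- Second partial PT conjugation: conjugate all coefficients, then ζ₂ ↦ −ζ₂. -/
noncomputable def C22 (p : MvPolynomial (Fin 2) ℂ) : MvPolynomial (Fin 2) ℂ :=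
  aeval (fun j : Fin 2 => if j = 1 then -(X j : MvPolynomial (Fin 2) ℂ) else X j)
    (MvPolynomial.map (starRingEnd ℂ) p)

section Lemmas
open MvPolynomial

lemma C2_add (p q : MvPolynomial (Fin 2) ℂ) : C2 (p + q) = C2 p + C2 q := by
  simp [C2, map_add]

lemma C2_sub (p q : MvPolynomial (Fin 2) ℂ) : C2 (p - q) = C2 p - C2 q := by
  simp [C2, map_sub]

lemma C2_mul (p q : MvPolynomial (Fin 2) ℂ) : C2 (p * q) = C2 p * C2 q := by
  simp [C2, map_mul]

lemma C2_C (c : ℂ) : C2 (C c) = C (starRingEnd ℂ c) := by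
  simp [C2, algebraMap_eq]

lemma C2_X (j : Fin 2) : C2 (X j) = -X j := by
  simp [C2]

lemma C2_smul (c : ℂ) (p : MvPolynomial (Fin 2) ℂ) :
    C2 (c • p) = (starRingEnd ℂ c) • C2 p := by
  rw [smul_eq_C_mul, smul_eq_C_mul, C2_mul, C2_C]

lemma C2_zero : C2 0 = 0 := by simp [C2]
lemma C2_one : C2 1 = 1 := by simp [C2]
lemma C2_neg (p : MvPolynomial (Fin 2) ℂ) : C2 (-p) = -C2 p := by simp [C2]

lemma C2_C2 (p : MvPolynomial (Fin 2) ℂ) : C2 (C2 p) = p := by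
  induction p using MvPolynomial.induction_on with
  | C c => simp [C2_C]
  | add p q hp hq => rw [C2_add, C2_add, hp, hq]
  | mul_X p n h => rw [C2_mul, C2_X, C2_mul, C2_neg, C2_X, h]; ring

lemma pderiv_C2 (i : Fin 2) (p : MvPolynomial (Fin 2) ℂ) :
    pderiv i (C2 p) = - C2 (pderiv i p) := by
  induction p using MvPolynomial.induction_on with
  | C c => simp [C2_C, C2_zero]
  | add p q hp hq => simp [C2_add, hp, hq]; ring
  | mul_X p n h =>
      rw [C2_mul, C2_X, pderiv_mul, h, pderiv_mul, C2_add, C2_mul, C2_mul, C2_X]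
      simp [pderiv_X, Pi.single_apply, apply_ite C2, C2_one, C2_zero]
      ring

lemma Dop_C2 (p : MvPolynomial (Fin 2) ℂ) : Dop (C2 p) = C2 (Dop p) := by
  rw [Dop, Dop, pderiv_C2, pderiv_C2, C2_sub, C2_mul, C2_mul, C2_X, C2_X]
  ring

lemma Tmix_C2 (p : MvPolynomial (Fin 2) ℂ) : Tmix (C2 p) = C2 (Tmix p) := by
  rw [Tmix, Tmix, pderiv_C2, pderiv_C2, C2_add, C2_mul, C2_mul, C2_X, C2_X]
  ring

end Lemmas

theorem ham_C2_selfAdjoint (γ α : ℝ) (p : MvPolynomial (Fin 2) ℂ) :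
    C2 (HamStar γ α (C2 p)) = Ham γ α p := by
  rw [HamStar, Ham, C2_add, C2_sub, C2_smul, C2_smul]
  simp only [Dop_C2, Tmix_C2, C2_C2]
  simp [Complex.conj_ofReal]
end

section
/- The Hamiltonian H has partial PT-symmetry in the first variable: C₂⁽¹⁾(H(C₂⁽¹⁾(p))) = H(p) for every polynomial p in two complex variables. -/
open MvPolynomial

lemma C21_add (p q : MvPolynomial (Fin 2) ℂ) : C21 (p + q) = C21 p + C21 q := by
  simp [C21, map_add]

lemma C21_sub (p q : MvPolynomial (Fin 2) ℂ) : C21 (p - q) = C21 p - C21 q := by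
  simp [C21, map_sub]

lemma C21_mul (p q : MvPolynomial (Fin 2) ℂ) : C21 (p * q) = C21 p * C21 q := by
  simp [C21, map_mul]

lemma C21_Cc (a : ℂ) : C21 (C a) = C (starRingEnd ℂ a) := by
  simp [C21]

lemma C21_X0 : C21 (X 0 : MvPolynomial (Fin 2) ℂ) = -X 0 := by
  simp [C21]

lemma C21_X1 : C21 (X 1 : MvPolynomial (Fin 2) ℂ) = X 1 := by
  simp [C21]

lemma C21_smul (z : ℂ) (p : MvPolynomial (Fin 2) ℂ) :
    C21 (z • p) = (starRingEnd ℂ z) • C21 p := by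
  rw [smul_eq_C_mul, smul_eq_C_mul, C21_mul, C21_Cc]

lemma C21_zero : C21 (0 : MvPolynomial (Fin 2) ℂ) = 0 := by
  simp [C21]

lemma C21_neg (p : MvPolynomial (Fin 2) ℂ) : C21 (-p) = -C21 p := by
  simp [C21, map_neg]

lemma C21_one : C21 (1 : MvPolynomial (Fin 2) ℂ) = 1 := by
  simp [C21]

lemma pd01 : pderiv 0 (X 1 : MvPolynomial (Fin 2) ℂ) = 0 :=
  pderiv_X_of_ne (by decide)

lemma pd10 : pderiv 1 (X 0 : MvPolynomial (Fin 2) ℂ) = 0 :=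
  pderiv_X_of_ne (by decide)

lemma pderiv0_C21 (p : MvPolynomial (Fin 2) ℂ) :
    pderiv 0 (C21 p) = -C21 (pderiv 0 p) := by
  induction p using MvPolynomial.induction_on with
  | C a => simp [C21_Cc, C21_zero]
  | add p q hp hq => rw [C21_add, map_add, map_add, C21_add, hp, hq]; ring
  | mul_X p i hp =>
      fin_cases i <;>
      · rw [C21_mul, pderiv_mul, pderiv_mul, C21_add, C21_mul, C21_mul, hp]
        simp only [Fin.mk_zero, Fin.mk_one, Fin.isValue, C21_X0, C21_X1, C21_one,
          C21_zero, C21_neg, map_neg, pderiv_X_self, pd01, pd10, mul_one, mul_zero,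
          mul_neg, neg_mul, neg_neg, neg_zero, add_zero]
        try ring

lemma pderiv1_C21 (p : MvPolynomial (Fin 2) ℂ) :
    pderiv 1 (C21 p) = C21 (pderiv 1 p) := by
  induction p using MvPolynomial.induction_on with
  | C a => simp [C21_Cc, C21_zero]
  | add p q hp hq => rw [C21_add, map_add, map_add, C21_add, hp, hq]
  | mul_X p i hp =>
      fin_cases i <;>
      · rw [C21_mul, pderiv_mul, pderiv_mul, C21_add, C21_mul, C21_mul, hp]
        simp only [Fin.mk_zero, Fin.mk_one, Fin.isValue, C21_X0, C21_X1, C21_one,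
          C21_zero, C21_neg, map_neg, pderiv_X_self, pd01, pd10, mul_one, mul_zero,
          mul_neg, neg_mul, neg_neg, neg_zero, add_zero]
        try ring

lemma Dop_C21 (p : MvPolynomial (Fin 2) ℂ) : Dop (C21 p) = C21 (Dop p) := by
  simp only [Dop, C21_sub, C21_mul, C21_X0, C21_X1, pderiv0_C21, pderiv1_C21]
  ring

lemma Tmix_C21 (p : MvPolynomial (Fin 2) ℂ) : Tmix (C21 p) = -C21 (Tmix p) := by
  simp only [Tmix, C21_add, C21_mul, C21_X0, C21_X1, pderiv0_C21, pderiv1_C21]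
  ring

lemma C21_C21 (p : MvPolynomial (Fin 2) ℂ) : C21 (C21 p) = p := by
  induction p using MvPolynomial.induction_on with
  | C a => simp [C21_Cc]
  | add p q hp hq => rw [C21_add, C21_add, hp, hq]
  | mul_X p i hp =>
      rw [C21_mul, C21_mul, hp]
      fin_cases i <;> simp [C21_X0, C21_X1, C21_neg]

theorem ham_partial_PT_symmetry_first (γ α : ℝ) (p : MvPolynomial (Fin 2) ℂ) :
    C21 (Ham γ α (C21 p)) = Ham γ α p := by
  simp only [Ham, C21_add, C21_neg, C21_smul, Dop_C21, Tmix_C21, C21_C21, map_mul,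
    Complex.conj_I, Complex.conj_ofReal, smul_neg, neg_mul, neg_smul, neg_neg]
end

section
/- The Hamiltonian H has partial PT-symmetry in the second variable: C₂⁽²⁾(H(C₂⁽²⁾(p))) = H(p) for every polynomial p in two complex variables. -/
open MvPolynomial

lemma C22_add (p q : MvPolynomial (Fin 2) ℂ) : C22 (p + q) = C22 p + C22 q := by
  simp [C22]

lemma C22_mul (p q : MvPolynomial (Fin 2) ℂ) : C22 (p * q) = C22 p * C22 q := by
  simp [C22]

lemma C22_zero : C22 (0 : MvPolynomial (Fin 2) ℂ) = 0 := by simp [C22]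

lemma C22_neg (p : MvPolynomial (Fin 2) ℂ) : C22 (-p) = -C22 p := by simp [C22]

lemma C22_C (c : ℂ) : C22 (C c) = C (starRingEnd ℂ c) := by
  simp [C22, algebraMap_eq]

lemma C22_X0 : C22 (X 0 : MvPolynomial (Fin 2) ℂ) = X 0 := by
  simp [C22]

lemma C22_X1 : C22 (X 1 : MvPolynomial (Fin 2) ℂ) = -X 1 := by
  simp [C22]

lemma C22_smul (c : ℂ) (p : MvPolynomial (Fin 2) ℂ) :
    C22 (c • p) = (starRingEnd ℂ c) • C22 p := by
  rw [smul_eq_C_mul, C22_mul, C22_C, smul_eq_C_mul]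

lemma C22_C22 (p : MvPolynomial (Fin 2) ℂ) : C22 (C22 p) = p := by
  induction p using MvPolynomial.induction_on with
  | C c => simp [C22_C]
  | add p q hp hq => simp [C22_add, hp, hq]
  | mul_X p i hp =>
      fin_cases i <;> simp [C22_mul, C22_X0, C22_X1, C22_neg, hp]

lemma pderiv0_C22 (p : MvPolynomial (Fin 2) ℂ) :
    pderiv 0 (C22 p) = C22 (pderiv 0 p) := by
  induction p using MvPolynomial.induction_on with
  | C c => simp [C22_C, C22_zero]
  | add p q hp hq => simp [C22_add, hp, hq]
  | mul_X p i hp =>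
      fin_cases i <;>
        simp [C22_mul, C22_X0, C22_X1, C22_add, pderiv_mul, hp, C22_zero, C22_neg, mul_comm]

lemma pderiv1_C22 (p : MvPolynomial (Fin 2) ℂ) :
    pderiv 1 (C22 p) = -C22 (pderiv 1 p) := by
  induction p using MvPolynomial.induction_on with
  | C c => simp [C22_C, C22_zero]
  | add p q hp hq => simp [C22_add, hp, hq]; ring
  | mul_X p i hp =>
      fin_cases i <;>
        simp [C22_mul, C22_X0, C22_X1, C22_add, pderiv_mul, hp, C22_zero, C22_neg, mul_comm]

lemma Dop_C22 (p : MvPolynomial (Fin 2) ℂ) : Dop (C22 p) = C22 (Dop p) := by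
  simp [Dop, sub_eq_add_neg, C22_add, C22_mul, C22_X0, C22_X1, pderiv0_C22, pderiv1_C22,
    C22_neg, C22_smul]

lemma Tmix_C22 (p : MvPolynomial (Fin 2) ℂ) : Tmix (C22 p) = -C22 (Tmix p) := by
  simp [Tmix, C22_add, C22_mul, C22_X0, C22_X1, pderiv0_C22, pderiv1_C22, C22_neg]
  ring

theorem ham_partial_PT_symmetry_second (γ α : ℝ) (p : MvPolynomial (Fin 2) ℂ) :
    C22 (Ham γ α (C22 p)) = Ham γ α p := by
  unfold Ham
  simp only [C22_add, C22_smul, C22_neg, Dop_C22, Tmix_C22, C22_C22, smul_neg, neg_neg]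
  simp [Complex.conj_I]
end

section
/- The Hamiltonian H lacks global PT-symmetry: if γ ≠ 0 then there exists a polynomial p in two complex variables with C₂(H(C₂(p))) ≠ H(p). -/
open MvPolynomial

theorem ham_lacks_global_PT_symmetry (γ α : ℝ) (hγ : γ ≠ 0) :
    ∃ p : MvPolynomial (Fin 2) ℂ, C2 (Ham γ α (C2 p)) ≠ Ham γ α p := by
  refine ⟨X 0, fun h => ?_⟩
  have hC2X : C2 (X 0 : MvPolynomial (Fin 2) ℂ) = -X 0 := by
    simp [C2]
  have h1 : Ham γ α (C2 (X 0)) = -X 0 - (Complex.I * γ) • X 1 - (α:ℂ) • X 0 := by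
    rw [hC2X]
    simp [Ham, Dop, Tmix, smul_sub, sub_eq_add_neg]
  have h2 : Ham γ α (X 0) = X 0 + (Complex.I * γ) • X 1 + (α:ℂ) • X 0 := by
    simp [Ham, Dop, Tmix]
  rw [h1, h2] at h
  have h3 : C2 (-X 0 - (Complex.I * γ) • X 1 - (α:ℂ) • X 0)
      = X 0 - (Complex.I * γ) • X 1 + (α:ℂ) • X 0 := by
    simp [C2, smul_eq_C_mul]
    ring
  rw [h3] at h
  have h5 := congrArg (coeff (Finsupp.single 1 1)) h
  have hne : (Finsupp.single 1 1 : Fin 2 →₀ ℕ) ≠ Finsupp.single 0 1 := by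
    intro hh
    have := DFunLike.congr_fun hh 1
    simp at this
  simp [coeff_sub, coeff_add, coeff_smul, coeff_X, if_neg hne] at h5
  have h6 : (Complex.I * γ) = 0 := by linear_combination -h5 / 2
  rcases mul_eq_zero.1 h6 with h7 | h7
  · exact Complex.I_ne_zero h7
  · exact hγ (by exact_mod_cast h7)
end

section
/- Suppose all diagonal entries b_n of the tridiagonal matrix M are real, and all off-diagonal entries c_n and d_n are purely imaginary with d_n ≠ 0. Then for every real λ, the values of the recursion polynomials alternate between real and purely imaginary: P_n(λ) is real when n is even, and P_n(λ) is purely imaginary when n is odd. -/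
/-- The `l×l` tridiagonal matrix with diagonal `b`, superdiagonal `d`, subdiagonal `c`. -/
noncomputable def triM (l : ℕ) (b c d : ℕ → ℂ) : Matrix (Fin l) (Fin l) ℂ :=
  Matrix.of fun i j : Fin l =>
    if (i : ℕ) = (j : ℕ) then b i
    else if (j : ℕ) = (i : ℕ) + 1 then d i
    else if (i : ℕ) = (j : ℕ) + 1 then c j
    else 0

/-- `Pseq b c d lam n` is the polynomial value `P_{n-1}(lam)` of the three-term recursion:
`P_{-1} = 0`, `P_0 = 1`, `P_{n+1}(λ) = (1/d_n)·[(λ − b_n)·P_n(λ) − c_{n−1}·P_{n−1}(λ)]`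
with the convention `c_{-1} = 0`. -/
noncomputable def Pseq (b c d : ℕ → ℂ) (lam : ℂ) : ℕ → ℂ
  | 0 => 0
  | 1 => 1
  | (n + 2) =>
      (1 / d n) * ((lam - b n) * Pseq b c d lam (n + 1)
        - (if n = 0 then 0 else c (n - 1)) * Pseq b c d lam n)

/-- `P n lam = P_n(lam)`. -/
noncomputable def Ppoly (b c d : ℕ → ℂ) (n : ℕ) (lam : ℂ) : ℂ := Pseq b c d lam (n + 1)

lemma pseq_key (b c d : ℕ → ℂ)
    (hb : ∀ n, (b n).im = 0) (hc : ∀ n, (c n).re = 0)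
    (hdim : ∀ n, (d n).re = 0) (lam : ℝ) :
    ∀ n : ℕ, (Odd n → (Pseq b c d (lam : ℂ) n).im = 0) ∧
      (Even n → (Pseq b c d (lam : ℂ) n).re = 0) := by
  intro n
  induction n using Nat.strong_induction_on with
  | _ n ih =>
    match n with
    | 0 => simp [Pseq]
    | 1 => simp [Pseq]
    | (m + 2) =>
      have h1 := ih (m + 1) (by omega)
      have h0 := ih m (by omega)
      have hC : (if m = 0 then (0 : ℂ) else c (m - 1)).re = 0 := by
        split <;> simp [hc]
      have hA : ((lam : ℂ) - b m).im = 0 := by simp [hb]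
      have hdre : ((1 : ℂ) / d m).re = 0 := by
        simp [one_div, Complex.inv_re, hdim]
      constructor
      · intro hodd
        have hm : Odd m := by
          rcases hodd with ⟨k, hk⟩; exact ⟨k - 1, by omega⟩
        have e1 : Even (m + 1) := hm.add_one
        have q1 := h1.2 e1
        have q0 := h0.1 hm
        show ((1 / d m) * (((lam : ℂ) - b m) * Pseq b c d (lam : ℂ) (m + 1)
          - (if m = 0 then 0 else c (m - 1)) * Pseq b c d (lam : ℂ) m)).im = 0
        by_cases hm0 : m = 0
        · exact absurd (hm0 ▸ hm) (by decide)
        · simp [hm0, Complex.mul_im, Complex.mul_re, Complex.sub_im, Complex.sub_re,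
            hdre, hA, hc, q1, q0, hdim]
      · intro heven
        have hm : Even m := by
          rcases heven with ⟨k, hk⟩; exact ⟨k - 1, by omega⟩
        have o1 : Odd (m + 1) := hm.add_one
        have q1 := h1.1 o1
        have q0 := h0.2 hm
        show ((1 / d m) * (((lam : ℂ) - b m) * Pseq b c d (lam : ℂ) (m + 1)
          - (if m = 0 then 0 else c (m - 1)) * Pseq b c d (lam : ℂ) m)).re = 0
        by_cases hm0 : m = 0 <;>
          simp [hm0, Pseq, hb, Complex.mul_im, Complex.mul_re, Complex.sub_im, Complex.sub_re,
            hdre, hA, hc, q1, q0, hdim]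

theorem recursion_values_alternate_real_imaginary (b c d : ℕ → ℂ)
    (hb : ∀ n, (b n).im = 0) (hc : ∀ n, (c n).re = 0)
    (hdim : ∀ n, (d n).re = 0) (hd : ∀ n, d n ≠ 0) (lam : ℝ) :
    ∀ n : ℕ, (Even n → (Ppoly b c d n (lam : ℂ)).im = 0) ∧
      (Odd n → (Ppoly b c d n (lam : ℂ)).re = 0) := by
  intro n
  have h := pseq_key b c d hb hc hdim lam (n + 1)
  exact ⟨fun he => h.1 he.add_one, fun ho => h.2 ho.add_one⟩
end

section
/- Reality of the eigenvalue implies partial PT-symmetry of the eigenstate: let γ, α be real with γ ≠ 0, let m ≥ 1, and let ψ = Σ_{k=0}^{m} v_k · ζ₁^{m−k} ζ₂^k be a nonzero homogeneous polynomial of degree m satisfying H(ψ) = λ·ψ with λ real and v_0 = 1. If m is even, then C₂⁽¹⁾(ψ) = ψ and C₂⁽²⁾(ψ) = ψ; if m is odd, then C₂⁽¹⁾(ψ) = −ψ and C₂⁽²⁾(ψ) = ψ. -/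
open MvPolynomial

section Aux
open Finsupp


noncomputable def Ek (m k : ℕ) : Fin 2 →₀ ℕ := Finsupp.single 0 (m - k) + Finsupp.single 1 k

lemma Ek_apply0 (m k : ℕ) : Ek m k 0 = m - k := by
  simp [Ek, Finsupp.single_apply]

lemma Ek_apply1 (m k : ℕ) : Ek m k 1 = k := by
  simp [Ek, Finsupp.single_apply]

lemma Ek_inj {m j k : ℕ} (h : Ek m j = Ek m k) : j = k := by
  have := DFunLike.congr_fun h 1
  simpa [Ek_apply1] using this

lemma X_mul_monomial (i : Fin 2) (s : Fin 2 →₀ ℕ) (a : ℂ) :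
    (X i : MvPolynomial (Fin 2) ℂ) * monomial s a = monomial (Finsupp.single i 1 + s) a := by
  rw [X, monomial_mul, one_mul]

lemma X_mul_pderiv_same (i : Fin 2) (s : Fin 2 →₀ ℕ) (a : ℂ) :
    (X i : MvPolynomial (Fin 2) ℂ) * pderiv i (monomial s a) = monomial s (a * s i) := by
  rw [pderiv_monomial, X_mul_monomial]
  rcases Nat.eq_zero_or_pos (s i) with h | h
  · simp [h]
  · congr 1
    rw [add_comm, tsub_add_cancel_of_le]
    rwa [Finsupp.single_le_iff]

lemma Dop_monomial (s : Fin 2 →₀ ℕ) (a : ℂ) :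
    Dop (monomial s a) = monomial s (a * ((s 0 : ℂ) - (s 1 : ℂ))) := by
  rw [Dop, X_mul_pderiv_same, X_mul_pderiv_same, ← map_sub]
  ring_nf


lemma e2 (m j : ℕ) :
    Finsupp.single (1 : Fin 2) 1 + (Ek m j - Finsupp.single 0 1) = Ek m (j+1) := by
  ext i
  fin_cases i <;>
    simp [Ek, Finsupp.single_apply, Finsupp.tsub_apply] <;> omega

lemma e1 {m j : ℕ} (hj : j ≤ m) (h1 : 1 ≤ j) :
    Finsupp.single (0 : Fin 2) 1 + (Ek m j - Finsupp.single 1 1) = Ek m (j-1) := by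
  ext i
  fin_cases i <;>
    simp [Ek, Finsupp.single_apply, Finsupp.tsub_apply] <;> omega

lemma Tmix_monomial_Ek {m j : ℕ} (hj : j ≤ m) (a : ℂ) :
    Tmix (monomial (Ek m j) a) =
      monomial (Ek m (j-1)) (a * (j : ℂ)) + monomial (Ek m (j+1)) (a * ((m - j : ℕ) : ℂ)) := by
  rw [Tmix, pderiv_monomial, pderiv_monomial, X_mul_monomial, X_mul_monomial,
    Ek_apply0, Ek_apply1, e2]
  rcases Nat.eq_zero_or_pos j with h | h
  · simp [h]
  · rw [e1 hj h]


noncomputable def cc (m k : ℕ) : ℂ := ((m - k : ℕ) : ℂ) - (k : ℂ)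

lemma Dop_sum (s : Finset ℕ) (F : ℕ → MvPolynomial (Fin 2) ℂ) :
    Dop (∑ j ∈ s, F j) = ∑ j ∈ s, Dop (F j) := by
  simp [Dop, map_sum, Finset.mul_sum, Finset.sum_sub_distrib]

lemma Tmix_sum (s : Finset ℕ) (F : ℕ → MvPolynomial (Fin 2) ℂ) :
    Tmix (∑ j ∈ s, F j) = ∑ j ∈ s, Tmix (F j) := by
  simp [Tmix, map_sum, Finset.mul_sum, Finset.sum_add_distrib]

lemma recurrence (γ α : ℝ) (m : ℕ) (v : ℕ → ℂ) (lam : ℝ)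
    (heig : Ham γ α (∑ j ∈ Finset.range (m + 1), monomial (Ek m j) (v j)) =
      (lam : ℂ) • ∑ j ∈ Finset.range (m + 1), monomial (Ek m j) (v j))
    (k : ℕ) (hk : k ≤ m) :
    v k * cc m k
      + Complex.I * (γ : ℂ) * ((if k + 1 ≤ m then v (k + 1) * ((k : ℂ) + 1) else 0)
        + (if 1 ≤ k then v (k - 1) * ((m - (k - 1) : ℕ) : ℂ) else 0))
      + (α : ℂ) * (v k * cc m k * cc m k) = (lam : ℂ) * v k := by
  have h := congrArg (coeff (Ek m k)) heig
  rw [Ham, Dop_sum, Tmix_sum, Dop_sum] at h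
  have hds : ∀ j, Dop (monomial (Ek m j) (v j)) = monomial (Ek m j) (v j * cc m j) := by
    intro j
    rw [Dop_monomial, Ek_apply0, Ek_apply1, cc]
  have hdds : ∀ j, Dop (Dop (monomial (Ek m j) (v j))) =
      monomial (Ek m j) (v j * cc m j * cc m j) := by
    intro j
    rw [hds, Dop_monomial, Ek_apply0, Ek_apply1, cc]
  rw [show (∑ j ∈ Finset.range (m+1), Dop (Dop (monomial (Ek m j) (v j))))
      = ∑ j ∈ Finset.range (m+1), monomial (Ek m j) (v j * cc m j * cc m j) from
        Finset.sum_congr rfl fun j _ => hdds j] at h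
  rw [show (∑ j ∈ Finset.range (m+1), Dop (monomial (Ek m j) (v j)))
      = ∑ j ∈ Finset.range (m+1), monomial (Ek m j) (v j * cc m j) from
        Finset.sum_congr rfl fun j _ => hds j] at h
  rw [show (∑ j ∈ Finset.range (m+1), Tmix (monomial (Ek m j) (v j)))
      = ∑ j ∈ Finset.range (m+1), (monomial (Ek m (j-1)) (v j * (j : ℂ))
          + monomial (Ek m (j+1)) (v j * ((m - j : ℕ) : ℂ))) from
        Finset.sum_congr rfl fun j hj =>
          Tmix_monomial_Ek (by simpa using Nat.lt_succ_iff.mp (Finset.mem_range.mp hj)) _] at h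
  simp only [coeff_add, coeff_smul, coeff_sum, coeff_monomial, smul_eq_mul] at h
  have hEk : ∀ j l : ℕ, (Ek m j = Ek m l) = (j = l) := by
    intro j l
    exact propext ⟨Ek_inj, fun h' => by rw [h']⟩
  simp only [hEk] at h
  -- now evaluate the four sums
  rw [Finset.sum_ite_eq' (Finset.range (m+1)) k (fun j => v j * cc m j)] at h
  rw [Finset.sum_ite_eq' (Finset.range (m+1)) k (fun j => v j * cc m j * cc m j)] at h
  rw [if_pos (Finset.mem_range.mpr (Nat.lt_succ_of_le hk)),
      if_pos (Finset.mem_range.mpr (Nat.lt_succ_of_le hk))] at h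
  rw [Finset.sum_add_distrib] at h
  have hT1 : (∑ j ∈ Finset.range (m+1), if j - 1 = k then v j * (j : ℂ) else 0)
      = (if k + 1 ≤ m then v (k+1) * ((k : ℂ) + 1) else 0) := by
    rw [show (∑ j ∈ Finset.range (m+1), if j - 1 = k then v j * (j : ℂ) else 0)
        = ∑ j ∈ Finset.range (m+1), if j = k + 1 then v j * (j : ℂ) else 0 from
        Finset.sum_congr rfl fun j _ => by
          by_cases hj : j = k + 1
          · subst hj; simp
          · rw [if_neg hj]
            by_cases hj1 : j - 1 = k
            · have : j = 0 := by omega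
              subst this; simp
            · rw [if_neg hj1]]
    rw [Finset.sum_ite_eq' (Finset.range (m+1)) (k+1) (fun j => v j * (j : ℂ))]
    by_cases hkm : k + 1 ≤ m
    · rw [if_pos (Finset.mem_range.mpr (by omega)), if_pos hkm]
      push_cast; ring
    · rw [if_neg (by simp; omega), if_neg hkm]
  have hT2 : (∑ j ∈ Finset.range (m+1), if j + 1 = k then v j * ((m - j : ℕ) : ℂ) else 0)
      = (if 1 ≤ k then v (k-1) * ((m - (k-1) : ℕ) : ℂ) else 0) := by
    by_cases hk1 : 1 ≤ k
    · rw [show (∑ j ∈ Finset.range (m+1), if j + 1 = k then v j * ((m - j : ℕ) : ℂ) else 0)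
          = ∑ j ∈ Finset.range (m+1), if j = k - 1 then v j * ((m - j : ℕ) : ℂ) else 0 from
          Finset.sum_congr rfl fun j _ => if_congr (by omega) rfl rfl]
      rw [Finset.sum_ite_eq' (Finset.range (m+1)) (k-1) (fun j => v j * ((m - j : ℕ) : ℂ))]
      rw [if_pos (Finset.mem_range.mpr (by omega)), if_pos hk1]
    · have : k = 0 := by omega
      subst this
      simp
  rw [hT1, hT2, Finset.sum_ite_eq' (Finset.range (m+1)) k v,
    if_pos (Finset.mem_range.mpr (Nat.lt_succ_of_le hk))] at h
  linear_combination h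


lemma conj_cc (m k : ℕ) : (starRingEnd ℂ) (cc m k) = cc m k := by
  simp [cc]

lemma conj_prop (γ α : ℝ) (hγ : γ ≠ 0) (m : ℕ) (v : ℕ → ℂ) (lam : ℝ)
    (hv0 : v 0 = 1)
    (hrec : ∀ k, k ≤ m →
      v k * cc m k
        + Complex.I * (γ : ℂ) * ((if k + 1 ≤ m then v (k + 1) * ((k : ℂ) + 1) else 0)
          + (if 1 ≤ k then v (k - 1) * ((m - (k - 1) : ℕ) : ℂ) else 0))
        + (α : ℂ) * (v k * cc m k * cc m k) = (lam : ℂ) * v k) :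
    ∀ k, k ≤ m → (starRingEnd ℂ) (v k) = (-1 : ℂ) ^ k * v k := by
  intro k
  induction k using Nat.strong_induction_on with
  | _ k IH =>
    match k with
    | 0 => intro _; simp [hv0]
    | n + 1 =>
      intro hk1
      have hE := hrec n (by omega)
      rw [if_pos (show n + 1 ≤ m by omega)] at hE
      have hIHn := IH n (by omega) (by omega)
      have hne : Complex.I * (γ : ℂ) * ((n : ℂ) + 1) ≠ 0 := by
        have : ((n : ℂ) + 1) ≠ 0 := Nat.cast_add_one_ne_zero n
        simp [Complex.I_ne_zero, Complex.ofReal_ne_zero, hγ, this]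
      apply mul_left_cancel₀ hne
      show Complex.I * (γ : ℂ) * ((n : ℂ) + 1) * _ =
        Complex.I * (γ : ℂ) * ((n : ℂ) + 1) * ((-1 : ℂ) ^ (n + 1) * v (n + 1))
      rcases Nat.eq_zero_or_pos n with hn0 | hn1
      · subst hn0
        simp only [if_neg (by omega : ¬ (1 ≤ 0)), add_zero] at hE
        have hE2 := congrArg (starRingEnd ℂ) hE
        simp only [map_add, map_mul, Complex.conj_I, map_natCast, Complex.conj_ofReal,
          conj_cc, map_one, hv0, map_ofNat] at hE2
        rw [hv0] at hE
        linear_combination hE - hE2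
      · rw [if_pos (show 1 ≤ n by omega)] at hE
        have hp : ((-1 : ℂ)) ^ (n - 1) * (-1) = (-1 : ℂ) ^ n := by
          rw [← pow_succ, show n - 1 + 1 = n by omega]
        have hIHp : (starRingEnd ℂ) (v (n - 1)) = -(-1 : ℂ) ^ n * v (n - 1) := by
          rw [IH (n-1) (by omega) (by omega)]
          linear_combination -(v (n - 1)) * hp
        have hE2 := congrArg (starRingEnd ℂ) hE
        simp only [map_add, map_mul, Complex.conj_I, map_natCast, Complex.conj_ofReal,
          conj_cc, map_one, hIHn, hIHp] at hE2
        linear_combination (-1 : ℂ) ^ n * hE - hE2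


lemma term_eq (a : ℂ) (p q : ℕ) :
    C a * (X 0 : MvPolynomial (Fin 2) ℂ) ^ p * X 1 ^ q
      = monomial (Finsupp.single 0 p + Finsupp.single 1 q) a := by
  rw [X_pow_eq_monomial, X_pow_eq_monomial, C_apply, monomial_mul, monomial_mul, zero_add,
    mul_one, mul_one]

lemma negC : ((-1 : MvPolynomial (Fin 2) ℂ)) = C (-1) := by simp

lemma C21_psi (m : ℕ) (v : ℕ → ℂ)
    (hconj : ∀ k, k ≤ m → (starRingEnd ℂ) (v k) = (-1 : ℂ) ^ k * v k) :
    C21 (∑ k ∈ Finset.range (m + 1), C (v k) * X 0 ^ (m - k) * X 1 ^ k)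
      = C ((-1 : ℂ) ^ m) * ∑ k ∈ Finset.range (m + 1), C (v k) * X 0 ^ (m - k) * X 1 ^ k := by
  rw [C21, map_sum, map_sum, Finset.mul_sum]
  refine Finset.sum_congr rfl fun k hk => ?_
  have hk' : k ≤ m := Nat.lt_succ_iff.mp (Finset.mem_range.mp hk)
  simp only [map_mul, map_pow, MvPolynomial.map_C, MvPolynomial.map_X, aeval_C, aeval_X]
  rw [if_pos trivial, if_neg (by decide : ¬ ((1 : Fin 2) = 0))]
  rw [hconj k hk', MvPolynomial.algebraMap_eq,
    show (-(X 0 : MvPolynomial (Fin 2) ℂ)) ^ (m - k) = C ((-1 : ℂ) ^ (m - k)) * X 0 ^ (m - k) by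
      rw [neg_pow, negC, C_pow],
    show (C ((-1 : ℂ) ^ k * v k) : MvPolynomial (Fin 2) ℂ) * (C ((-1 : ℂ) ^ (m - k)) * X 0 ^ (m - k)) * X 1 ^ k
      = C ((-1 : ℂ) ^ k * v k * (-1 : ℂ) ^ (m - k)) * X 0 ^ (m - k) * X 1 ^ k by
      simp only [C_mul]; ring,
    show (-1 : ℂ) ^ k * v k * (-1 : ℂ) ^ (m - k) = (-1 : ℂ) ^ m * v k by
      rw [mul_comm ((-1 : ℂ) ^ k) (v k), mul_assoc, ← pow_add, show k + (m - k) = m by omega]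
      ring]
  simp only [C_mul, C_pow]
  ring

lemma C22_psi (m : ℕ) (v : ℕ → ℂ)
    (hconj : ∀ k, k ≤ m → (starRingEnd ℂ) (v k) = (-1 : ℂ) ^ k * v k) :
    C22 (∑ k ∈ Finset.range (m + 1), C (v k) * X 0 ^ (m - k) * X 1 ^ k)
      = ∑ k ∈ Finset.range (m + 1), C (v k) * X 0 ^ (m - k) * X 1 ^ k := by
  rw [C22, map_sum, map_sum]
  refine Finset.sum_congr rfl fun k hk => ?_
  have hk' : k ≤ m := Nat.lt_succ_iff.mp (Finset.mem_range.mp hk)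
  simp only [map_mul, map_pow, MvPolynomial.map_C, MvPolynomial.map_X, aeval_C, aeval_X]
  rw [if_pos trivial, if_neg (by decide : ¬ ((0 : Fin 2) = 1))]
  rw [hconj k hk', MvPolynomial.algebraMap_eq,
    show (-(X 1 : MvPolynomial (Fin 2) ℂ)) ^ k = C ((-1 : ℂ) ^ k) * X 1 ^ k by
      rw [neg_pow, negC, C_pow],
    show (C ((-1 : ℂ) ^ k * v k) : MvPolynomial (Fin 2) ℂ) * X 0 ^ (m - k) * (C ((-1 : ℂ) ^ k) * X 1 ^ k)
      = C ((-1 : ℂ) ^ k * v k * (-1 : ℂ) ^ k) * X 0 ^ (m - k) * X 1 ^ k by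
      simp only [C_mul]; ring,
    show (-1 : ℂ) ^ k * v k * (-1 : ℂ) ^ k = v k by
      rw [mul_comm ((-1 : ℂ) ^ k) (v k), mul_assoc, ← pow_add]
      rcases Nat.even_or_odd (k + k) with h | h
      · rw [h.neg_one_pow]; ring
      · exact absurd h (by simp [Nat.even_add])]


theorem real_eigenvalue_implies_partial_PT_symmetric_eigenstate
    (γ α : ℝ) (hγ : γ ≠ 0) (m : ℕ) (hm : 1 ≤ m) (v : ℕ → ℂ) (lam : ℝ)
    (ψ : MvPolynomial (Fin 2) ℂ)
    (hψdef : ψ = ∑ k ∈ Finset.range (m + 1), C (v k) * X 0 ^ (m - k) * X 1 ^ k)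
    (hψne : ψ ≠ 0)
    (heig : Ham γ α ψ = (lam : ℂ) • ψ)
    (hv0 : v 0 = 1) :
    (Even m → C21 ψ = ψ ∧ C22 ψ = ψ) ∧
    (Odd m → C21 ψ = -ψ ∧ C22 ψ = ψ) := by
  have hψ' : ψ = ∑ j ∈ Finset.range (m + 1), monomial (Ek m j) (v j) := by
    rw [hψdef]
    exact Finset.sum_congr rfl fun k _ => term_eq _ _ _
  have heig' := heig
  rw [hψ'] at heig'
  have hconj := conj_prop γ α hγ m v lam hv0 (recurrence γ α m v lam heig')
  have h21 : C21 ψ = C ((-1 : ℂ) ^ m) * ψ := by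
    rw [hψdef]; exact C21_psi m v hconj
  have h22 : C22 ψ = ψ := by
    rw [hψdef]; exact C22_psi m v hconj
  constructor
  · intro he
    exact ⟨by rw [h21, he.neg_one_pow, map_one, one_mul], h22⟩
  · intro ho
    exact ⟨by rw [h21, ho.neg_one_pow, map_neg, map_one, neg_one_mul], h22⟩

end Aux
end
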